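/- arXiv:1511.00163 — 2 statements merged into one kernel-verified Lean document; each statement's English description precedes it below -/
import Mathlib

section
/- For the L²-projection onto linear polynomials on I_n of length k_n, (Π_k v)'(t) = (6/k_n³) ∫_{I_n} (t_n − s)(s − t_{n-1}) v'(s) ds for any absolutely continuous v on I_n and any t. -/
/-!
The projection is affine in `t`, so its derivative is the coefficient
`12 / (b - a)^3 * ∫ (s - (a + b) / 2) v(s) ds`. Integrating this first moment by parts
against the bubble `(b - s)(s - a) / 2`, whose derivative is `(a + b) / 2 - s` and which
vanishes at both endpoints, turns it into `1/2 * ∫ (b - s)(s - a) v'(s) ds`.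
-/

open MeasureTheory

/-- The local L²-projection onto linear polynomials on (a,b), via its
explicit formula. -/
noncomputable def projL2 (a b : ℝ) (v : ℝ → ℝ) (t : ℝ) : ℝ :=
  (12 / (b - a) ^ 3) * (t - (a + b) / 2) *
      (∫ s in a..b, (s - (a + b) / 2) * v s)
    + (1 / (b - a)) * ∫ s in a..b, v s

lemma hasDerivAt_projL2 (a b : ℝ) (v : ℝ → ℝ) (t : ℝ) :
    HasDerivAt (projL2 a b v)
      (12 / (b - a) ^ 3 * ∫ s in a..b, (s - (a + b) / 2) * v s) t := by
  have hlin : HasDerivAt (fun t : ℝ => 12 / (b - a) ^ 3 * (t - (a + b) / 2))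
      (12 / (b - a) ^ 3) t := by
    simpa using ((hasDerivAt_id t).sub_const ((a + b) / 2)).const_mul (12 / (b - a) ^ 3)
  exact (hlin.mul_const _).add_const _

theorem integral_sub_midpoint_mul_eq {a b : ℝ} {v v' : ℝ → ℝ}
    (hderiv : ∀ s ∈ Set.uIcc a b, HasDerivAt v (v' s) s)
    (hint : IntervalIntegrable v' volume a b) :
    ∫ s in a..b, (s - (a + b) / 2) * v s
      = 1 / 2 * ∫ s in a..b, (b - s) * (s - a) * v' s := by
  have hbubble : ∀ x ∈ Set.uIcc a b,
      HasDerivAt (fun s : ℝ => (b - s) * (s - a) / 2) ((a + b) / 2 - x) x := by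
    intro x _
    exact ((((hasDerivAt_id' x).const_sub b).mul ((hasDerivAt_id' x).sub_const a)).div_const
      2).congr_deriv (by ring)
  have hparts := intervalIntegral.integral_mul_deriv_eq_deriv_mul hbubble hderiv
    ((continuous_const.sub continuous_id).intervalIntegrable a b) hint
  simp only [sub_self, zero_mul, mul_zero, zero_div, zero_sub] at hparts
  calc ∫ s in a..b, (s - (a + b) / 2) * v s
      = -∫ s in a..b, ((a + b) / 2 - s) * v s := by
        rw [← intervalIntegral.integral_neg]
        congr 1 with s
        ring
    _ = ∫ s in a..b, (b - s) * (s - a) / 2 * v' s := hparts.symm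
    _ = 1 / 2 * ∫ s in a..b, (b - s) * (s - a) * v' s := by
        rw [← intervalIntegral.integral_const_mul]
        congr 1 with s
        ring

theorem stmt_9 (a b : ℝ) (hab : a < b) (v v' : ℝ → ℝ)
    (hderiv : ∀ s ∈ Set.Icc a b, HasDerivAt v (v' s) s)
    (hint : IntervalIntegrable v' volume a b) :
    ∀ t : ℝ,
      deriv (projL2 a b v) t
        = (6 / (b - a) ^ 3) * ∫ s in a..b, (b - s) * (s - a) * v' s := by
  intro t
  rw [(hasDerivAt_projL2 a b v t).deriv,
    integral_sub_midpoint_mul_eq (Set.uIcc_of_le hab.le ▸ hderiv) hint]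
  ring
end

section
/- Let 0 < μ < 1, T > 0, and σ > 0. If the step sizes satisfy k_n ≤ γ k t_n^{1−1/γ} with k ≤ T, then for 2 ≤ n ≤ N, k_n^{4−μ} t_n^{2(σ−2)} ≤ C k^{min{γ(2σ−μ), 4−μ}} for a constant C depending only on γ, σ, μ, and T, provided 1 ≤ γ ≤ (4−μ)/(2σ−μ) and σ > μ/2. -/
/-! Bernoulli's inequality gives the mesh property `k_n ≤ γ t_n / n`, and the last step gives
`T / N ≤ k_N ≤ k`. Hence `k_n^(4-μ) t_n^(2σ-4) ≤ γ^(4-μ) t_n^(2σ-μ) / n^(4-μ)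
= γ^(4-μ) T^(2σ-μ) n^(γ(2σ-μ)-(4-μ)) N^(-γ(2σ-μ))`, where the power of `n` is at most `1`
because `γ(2σ-μ) ≤ 4-μ`, and `1 / N ≤ k / T`. -/

open Real

theorem rpow_sub_rpow_sub_le {x h γ : ℝ} (hγ : 1 ≤ γ) (hx : 0 < x) (hhx : h ≤ x) :
    x ^ γ - (x - h) ^ γ ≤ γ * h * x ^ (γ - 1) := by
  have hbernoulli : 1 + γ * (-(h / x)) ≤ (1 + -(h / x)) ^ γ :=
    one_add_mul_self_le_rpow_one_add (by rw [neg_le_neg_iff, div_le_one hx]; exact hhx) hγ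
  have hfactor : (x - h) ^ γ = x ^ γ * (1 + -(h / x)) ^ γ := by
    rw [← mul_rpow hx.le (by rw [← sub_eq_add_neg, sub_nonneg, div_le_one hx]; exact hhx)]
    congr 1
    field_simp
    ring
  have hscale : x ^ γ * (1 + γ * (-(h / x))) = x ^ γ - γ * h * x ^ (γ - 1) := by
    rw [rpow_sub_one hx.ne']
    field_simp
    ring
  have hscaled := mul_le_mul_of_nonneg_left hbernoulli (rpow_nonneg hx.le γ)
  linarith

theorem rpow_mul_rpow_sub_le_of_le_div {a t x γ p q : ℝ} (ha : 0 < a) (ht : 0 < t) (hx : 0 < x)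
    (hγ : 0 ≤ γ) (hp : 0 ≤ p) (hat : a ≤ γ * t / x) :
    a ^ p * t ^ (q - p) ≤ γ ^ p * t ^ q / x ^ p := by
  calc a ^ p * t ^ (q - p) ≤ (γ * t / x) ^ p * t ^ (q - p) := by gcongr
    _ = γ ^ p * t ^ q / x ^ p := by
      rw [div_rpow (by positivity) hx.le, mul_rpow hγ ht.le, rpow_sub ht]
      field_simp

/-- The real index lets `t_{n-1}` be written with real subtraction, as in the statement. -/
noncomputable def gradedNode (T γ : ℝ) (N : ℕ) (s : ℝ) : ℝ :=
  (s / N) ^ γ * T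

section GradedMesh

variable {T γ : ℝ} {N : ℕ} {s : ℝ}

theorem gradedNode_sub_pred_pos (hT : 0 < T) (hγ : 0 < γ) (hN : 0 < N) (hs : 1 ≤ s) :
    0 < gradedNode T γ N s - gradedNode T γ N (s - 1) := by
  have hN' : (0 : ℝ) < N := Nat.cast_pos.mpr hN
  have : ((s - 1) / N) ^ γ < (s / N) ^ γ :=
    rpow_lt_rpow (div_nonneg (by linarith) hN'.le) (by gcongr; linarith) hγ
  unfold gradedNode
  nlinarith

theorem gradedNode_sub_pred_le (hT : 0 ≤ T) (hγ : 1 ≤ γ) (hN : 0 < N) (hs : 1 ≤ s) :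
    gradedNode T γ N s - gradedNode T γ N (s - 1) ≤ γ * gradedNode T γ N s / s := by
  have hN' : (0 : ℝ) < N := Nat.cast_pos.mpr hN
  have hx : 0 < s / N := by positivity
  have hmvt := rpow_sub_rpow_sub_le hγ hx (h := 1 / N) (by gcongr)
  rw [← sub_div, rpow_sub_one hx.ne'] at hmvt
  have hrhs : γ * (1 / N) * ((s / N) ^ γ / (s / N)) = γ * (s / N) ^ γ / s := by
    field_simp
  unfold gradedNode
  rw [hrhs] at hmvt
  calc (s / N) ^ γ * T - ((s - 1) / N) ^ γ * T = ((s / N) ^ γ - ((s - 1) / N) ^ γ) * T := by ring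
    _ ≤ γ * (s / N) ^ γ / s * T := by gcongr
    _ = γ * ((s / N) ^ γ * T) / s := by ring

theorem div_le_gradedNode_sub_pred (hT : 0 ≤ T) (hγ : 1 ≤ γ) (hN : 0 < N) :
    T / N ≤ gradedNode T γ N N - gradedNode T γ N (N - 1) := by
  have hN' : (1 : ℝ) ≤ N := Nat.one_le_cast.mpr hN
  have hbase : ((N : ℝ) - 1) / N ≤ 1 := by rw [div_le_one (by linarith)]; linarith
  have hpow : (((N : ℝ) - 1) / N) ^ γ ≤ ((N : ℝ) - 1) / N := by
    simpa using rpow_le_rpow_of_exponent_ge' (div_nonneg (by linarith) (by linarith)) hbase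
      zero_le_one hγ
  unfold gradedNode
  rw [div_self (by positivity), one_rpow, one_mul]
  calc T / N = T - ((N : ℝ) - 1) / N * T := by field_simp; ring
    _ ≤ T - (((N : ℝ) - 1) / N) ^ γ * T := by gcongr

theorem gradedNode_rpow_div_rpow_le {p q k : ℝ} (hT : 0 < T) (hγ : 0 ≤ γ) (hq : 0 ≤ q)
    (hqp : γ * q ≤ p) (hN : 0 < N) (hs : 1 ≤ s) (hk : T / N ≤ k) :
    gradedNode T γ N s ^ q / s ^ p ≤ T ^ (q * (1 - γ)) * k ^ (γ * q) := by
  have hN' : (0 : ℝ) < N := Nat.cast_pos.mpr hN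
  have hs0 : 0 < s := by linarith
  have hsplit : gradedNode T γ N s ^ q / s ^ p
      = T ^ (q * (1 - γ)) * (T / N) ^ (γ * q) * (s ^ (γ * q) / s ^ p) := by
    unfold gradedNode
    rw [mul_rpow (by positivity) hT.le, ← rpow_mul (by positivity), div_rpow hs0.le hN'.le,
      div_rpow hT.le hN'.le, show q = q * (1 - γ) + γ * q by ring, rpow_add hT,
      show q * (1 - γ) + γ * q = q by ring]
    ring
  have hsmall : s ^ (γ * q) / s ^ p ≤ 1 :=
    div_le_one_of_le₀ (rpow_le_rpow_of_exponent_le hs hqp) (by positivity)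
  rw [hsplit]
  calc _ ≤ T ^ (q * (1 - γ)) * (T / N) ^ (γ * q) := mul_le_of_le_one_right (by positivity) hsmall
    _ ≤ T ^ (q * (1 - γ)) * k ^ (γ * q) := by gcongr

end GradedMesh

theorem stmt_15_general (μ T σ γ : ℝ) (hT : 0 < T)
    (hσ : μ / 2 < σ) (hγ1 : 1 ≤ γ) (hγ2 : γ ≤ (4 - μ) / (2 * σ - μ)) :
    ∃ C > 0, ∀ (N n : ℕ), 2 ≤ n → n ≤ N →
      ∀ k : ℝ,
        -- k bounds all the steps of the graded mesh t_j = (j/N)^γ T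
        (∀ j : ℕ, 1 ≤ j → j ≤ N →
          ((j : ℝ) / (N : ℝ)) ^ γ * T - (((j : ℝ) - 1) / (N : ℝ)) ^ γ * T ≤ k) →
        k ≤ T →
        (((n : ℝ) / (N : ℝ)) ^ γ * T - (((n : ℝ) - 1) / (N : ℝ)) ^ γ * T) ^ (4 - μ)
            * (((n : ℝ) / (N : ℝ)) ^ γ * T) ^ (2 * (σ - 2))
          ≤ C * k ^ min (γ * (2 * σ - μ)) (4 - μ) := by
  have hγ0 : 0 < γ := by linarith
  have hq : 0 < 2 * σ - μ := by linarith
  have hqp : γ * (2 * σ - μ) ≤ 4 - μ := (le_div_iff₀ hq).mp hγ2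
  have hp : 0 ≤ 4 - μ := le_trans (by positivity) hqp
  refine ⟨γ ^ (4 - μ) * T ^ ((2 * σ - μ) * (1 - γ)), by positivity, ?_⟩
  intro N n hn hnN k hstep _
  have hN : 0 < N := by omega
  have hs : (1 : ℝ) ≤ n := by exact_mod_cast (by omega : 1 ≤ n)
  have hk : T / N ≤ k := (div_le_gradedNode_sub_pred hT.le hγ1 hN).trans (hstep N (by omega) le_rfl)
  rw [min_eq_left hqp]
  change (gradedNode T γ N n - gradedNode T γ N (n - 1)) ^ (4 - μ)
      * gradedNode T γ N n ^ (2 * (σ - 2)) ≤ _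
  calc _ ≤ γ ^ (4 - μ) * gradedNode T γ N n ^ (2 * σ - μ) / (n : ℝ) ^ (4 - μ) := by
        rw [show 2 * (σ - 2) = (2 * σ - μ) - (4 - μ) by ring]
        exact rpow_mul_rpow_sub_le_of_le_div (gradedNode_sub_pred_pos hT hγ0 hN hs)
          (by unfold gradedNode; positivity) (by linarith) hγ0.le hp
          (gradedNode_sub_pred_le hT.le hγ1 hN hs)
    _ ≤ _ := by
        rw [mul_div_assoc, mul_assoc]
        gcongr
        exact gradedNode_rpow_div_rpow_le hT hγ0.le hq.le hqp hN hs hk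

theorem stmt_15 (μ T σ γ : ℝ) (hμ0 : 0 < μ) (hμ1 : μ < 1) (hT : 0 < T)
    (hσ : μ / 2 < σ) (hγ1 : 1 ≤ γ) (hγ2 : γ ≤ (4 - μ) / (2 * σ - μ)) :
    ∃ C > 0, ∀ (N n : ℕ), 2 ≤ n → n ≤ N →
      ∀ k : ℝ,
        -- k bounds all the steps of the graded mesh t_j = (j/N)^γ T
        (∀ j : ℕ, 1 ≤ j → j ≤ N →
          ((j : ℝ) / (N : ℝ)) ^ γ * T - (((j : ℝ) - 1) / (N : ℝ)) ^ γ * T ≤ k) →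
        k ≤ T →
        (((n : ℝ) / (N : ℝ)) ^ γ * T - (((n : ℝ) - 1) / (N : ℝ)) ^ γ * T) ^ (4 - μ)
            * (((n : ℝ) / (N : ℝ)) ^ γ * T) ^ (2 * (σ - 2))
          ≤ C * k ^ min (γ * (2 * σ - μ)) (4 - μ) :=
  stmt_15_general μ T σ γ hT hσ hγ1 hγ2
end
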